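/- Reliable normalizations agree on colors: if v is u-reliable, y is x-reliable, and u·v^ω = x·y^ω as infinite words, then col_u(v) = col_x(y). -/

import Mathlib

open scoped Classical

/-- Concatenation of a finite word with an infinite word. -/
def wcat {A : Type} (u : List A) (w : ℕ → A) : ℕ → A :=
  fun n => if h : n < u.length then u.get ⟨n, h⟩ else w (n - u.length)

/-- The infinite periodic word `v^ω`. -/
def wpow {A : Type} [Inhabited A] (v : List A) : ℕ → A :=
  fun n => v.getD (n % v.length) default

/-- The ultimately periodic word `u · v^ω`. -/
def upw {A : Type} [Inhabited A] (u v : List A) : ℕ → A := wcat u (wpow v)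

/-- The finite word `v^i`. -/
def wrep {A : Type} (v : List A) (i : ℕ) : List A := (List.replicate i v).flatten

/-- The right congruence `x ∼_L y`. -/
def simL {A : Type} (L : Set (ℕ → A)) (x y : List A) : Prop :=
  ∀ w : ℕ → A, wcat x w ∈ L ↔ wcat y w ∈ L

/-- `w` is `u`-invariant: `u ∼_L u·w`. -/
def UInv {A : Type} (L : Set (ℕ → A)) (u w : List A) : Prop := simL L u (u ++ w)

/-- `v` is relevant to `u`. -/
def URel {A : Type} (L : Set (ℕ → A)) (u v : List A) : Prop :=
  ∃ z : List A, UInv L u (v ++ z)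

/-- `v` has natural color at most `c` wrt `u`. -/
def ColorAtMost {A : Type} [Inhabited A] (L : Set (ℕ → A)) (u : List A) :
    ℕ → List A → Prop
  | c, v => ∀ z : List A, UInv L u (v ++ z) →
      ((upw u (v ++ z) ∈ L ↔ Even c) ∨
        ∃ i : ℕ, 0 < i ∧ ∃ c' : Fin c, ColorAtMost L u c' (wrep (v ++ z) i))
  termination_by c => c
  decreasing_by exact c'.isLt

/-- The natural color of the finite word `v` wrt `u`: `⊥` (i.e. `-∞`) if `v` is
irrelevant to `u`, and otherwise the minimal `c ≥ 0` as in the paper. -/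
noncomputable def ncol {A : Type} [Inhabited A] (L : Set (ℕ → A)) (u v : List A) :
    WithBot ℕ :=
  if URel L u v then ((sInf {c : ℕ | ColorAtMost L u c v} : ℕ) : WithBot ℕ) else ⊥

/-- `v` is stable wrt `u`. -/
def Stable {A : Type} [Inhabited A] (L : Set (ℕ → A)) (u v : List A) : Prop :=
  ∀ i : ℕ, 0 < i → ncol L u v = ncol L u (wrep v i)

/-- `v` is `u`-reliable. -/
def UReliable {A : Type} [Inhabited A] (L : Set (ℕ → A)) (u v : List A) : Prop :=
  UInv L u v ∧ Stable L u v

/-- The natural color of an ultimately periodic infinite word. -/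
noncomputable def icol {A : Type} [Inhabited A] (L : Set (ℕ → A)) (w : ℕ → A) : ℕ :=
  sInf {c : ℕ | ∃ u v : List A, v ≠ [] ∧ w = upw u v ∧ UInv L u v ∧
    ncol L u v = (c : WithBot ℕ)}

/-- The set of states visited infinitely often by a run. -/
def infSet {Q : Type} (r : ℕ → Q) : Set Q := {q | ∀ n : ℕ, ∃ m : ℕ, n ≤ m ∧ r m = q}

/-- The run of a complete deterministic automaton on an infinite word. -/
def runOf {A Q : Type} (δ : Q → A → Q) (q0 : Q) (w : ℕ → A) : ℕ → Q
  | 0 => q0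
  | n + 1 => δ (runOf δ q0 w n) (w n)

/-- `L` is ω-regular: recognized by some deterministic Muller automaton. -/
def OmegaRegular {A : Type} (L : Set (ℕ → A)) : Prop :=
  ∃ (Q : Type) (_ : Fintype Q) (q0 : Q) (δ : Q → A → Q) (α : Set (Set Q)),
    ∀ w : ℕ → A, w ∈ L ↔ infSet (runOf δ q0 w) ∈ α

/-! For a reliable `v`, stability makes `ncol L u v` the least `c` such that some positive power
of `v` has color at most `c` over `u` (`PowColorAtMost`). Unlike `ColorAtMost` itself, this is
unchanged when `v` is replaced by a power, when `u` is replaced by an `∼_L`-equivalent word, and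
when a prefix `a` of the period is moved into `u` (`u, ab ↦ ua, ba`), since
`(ab)^(j+1) = a(ba)^j b`. Once both periods are raised to the common length `|v| |y|`, two
normal forms of the same ultimately periodic word are related by exactly these moves. -/

open Function

theorem Nat.sInf_setOf_exists_eq {ι : Type*} [Nonempty ι] {P : ι → ℕ → Prop} {m : ℕ}
    (h : ∀ i, sInf {c | P i c} = m) : sInf {c | ∃ i, P i c} = m := by
  rcases Set.eq_empty_or_nonempty {c | ∃ i, P i c} with hS | hS
  · obtain ⟨i⟩ := ‹Nonempty ι›
    rw [hS, Nat.sInf_empty, ← h i, eq_comm, Nat.sInf_eq_zero]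
    exact .inr (Set.eq_empty_of_subset_empty (hS ▸ fun c hc => ⟨i, hc⟩))
  · obtain ⟨i, hi⟩ := Nat.sInf_mem hS
    rw [← h i]
    exact le_antisymm (csInf_le_csInf' ⟨_, hi⟩ fun c hc => ⟨i, hc⟩) (Nat.sInf_le hi)

section Words

variable {A : Type}

theorem wcat_apply_lt (x : List A) (w : ℕ → A) {n : ℕ} (h : n < x.length) :
    wcat x w n = x[n] := by
  simp [wcat, h]

theorem wcat_apply_of_le (x : List A) (w : ℕ → A) {n : ℕ} (h : x.length ≤ n) :
    wcat x w n = w (n - x.length) := by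
  simp [wcat, Nat.not_lt.mpr h]

theorem wcat_apply_length_add (x : List A) (w : ℕ → A) (m : ℕ) :
    wcat x w (x.length + m) = w m := by
  simp [wcat_apply_of_le]

theorem wcat_nil (w : ℕ → A) : wcat [] w = w := by
  funext n; simp [wcat]

theorem wcat_cons (a : A) (x : List A) (w : ℕ → A) :
    wcat (a :: x) w = Stream'.cons a (wcat x w) := by
  funext n; cases n <;> simp [wcat, Stream'.cons]

theorem wcat_append (x y : List A) (w : ℕ → A) :
    wcat (x ++ y) w = wcat x (wcat y w) := by
  induction x with
  | nil => simp [wcat_nil]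
  | cons a x ih => rw [List.cons_append, wcat_cons, wcat_cons, ih]

theorem wcat_inj {x x' : List A} {w w' : ℕ → A} (hlen : x.length = x'.length)
    (h : wcat x w = wcat x' w') : x = x' ∧ w = w' := by
  refine ⟨List.ext_getElem hlen fun n hn hn' => ?_, funext fun m => ?_⟩
  · rw [← wcat_apply_lt x w hn, ← wcat_apply_lt x' w' hn', h]
  · rw [← wcat_apply_length_add x w, ← wcat_apply_length_add x' w', h, hlen]

theorem eq_of_isFixedPt_wcat {v : List A} (hv : v ≠ []) {f g : ℕ → A}
    (hf : IsFixedPt (wcat v) f) (hg : IsFixedPt (wcat v) g) : f = g := by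
  have hlen : 0 < v.length := List.length_pos_iff.mpr hv
  funext n
  induction n using Nat.strong_induction_on with
  | _ n ih =>
    rw [← hf, ← hg]
    rcases lt_or_ge n v.length with h | h
    · rw [wcat_apply_lt _ _ h, wcat_apply_lt _ _ h]
    · rw [wcat_apply_of_le _ _ h, wcat_apply_of_le _ _ h, ih _ (by omega)]

theorem wrep_zero (v : List A) : wrep v 0 = [] := rfl

theorem wrep_one (v : List A) : wrep v 1 = v := by simp [wrep]

theorem wrep_succ (v : List A) (i : ℕ) : wrep v (i + 1) = v ++ wrep v i := by
  simp [wrep, List.replicate_succ]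

theorem wrep_add (v : List A) (m n : ℕ) : wrep v (m + n) = wrep v m ++ wrep v n := by
  rw [wrep, wrep, wrep, List.replicate_add, List.flatten_append]

theorem wrep_mul (v : List A) (a b : ℕ) : wrep (wrep v a) b = wrep v (b * a) := by
  induction b with
  | zero => simp [wrep_zero]
  | succ k ih => rw [wrep_succ, ih, Nat.succ_mul, Nat.add_comm, wrep_add]

theorem length_wrep (v : List A) (i : ℕ) : (wrep v i).length = i * v.length := by
  simp [wrep, List.length_flatten]

theorem wrep_ne_nil {v : List A} (hv : v ≠ []) {i : ℕ} (hi : 0 < i) : wrep v i ≠ [] := by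
  rw [← List.length_pos_iff, length_wrep]
  exact Nat.mul_pos hi (List.length_pos_iff.mpr hv)

theorem wrep_append_succ (a b : List A) (j : ℕ) :
    wrep (a ++ b) (j + 1) = a ++ wrep (b ++ a) j ++ b := by
  induction j with
  | zero => simp [wrep_one, wrep_zero]
  | succ k ih => rw [wrep_succ, ih, wrep_succ]; simp

variable [Inhabited A]

theorem isFixedPt_wcat_wpow (v : List A) : IsFixedPt (wcat v) (wpow v) := by
  funext n
  rcases lt_or_ge n v.length with h | h
  · rw [wcat_apply_lt _ _ h, wpow, Nat.mod_eq_of_lt h, List.getD_eq_getElem]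
  · rw [wcat_apply_of_le _ _ h, wpow, wpow, Nat.mod_eq_sub_mod h]

theorem wcat_wpow_rotate (a r : List A) : wcat a (wpow (r ++ a)) = wpow (a ++ r) := by
  rcases eq_or_ne (a ++ r) [] with h | h
  · obtain ⟨rfl, rfl⟩ := List.append_eq_nil_iff.mp h
    exact wcat_nil _
  refine eq_of_isFixedPt_wcat h ?_ (isFixedPt_wcat_wpow _)
  change wcat (a ++ r) (wcat a (wpow (r ++ a))) = wcat a (wpow (r ++ a))
  rw [wcat_append, ← wcat_append r, isFixedPt_wcat_wpow]

theorem wpow_inj {y y' : List A} (hlen : y.length = y'.length)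
    (h : wpow y = wpow y') : y = y' :=
  (wcat_inj hlen (by rw [isFixedPt_wcat_wpow, isFixedPt_wcat_wpow, h])).1

theorem isFixedPt_wcat_wrep_wpow (v : List A) (i : ℕ) :
    IsFixedPt (wcat (wrep v i)) (wpow v) := by
  induction i with
  | zero => exact wcat_nil _
  | succ i ih =>
    change wcat (wrep v (i + 1)) (wpow v) = wpow v
    rw [wrep_succ, wcat_append, ih.eq, isFixedPt_wcat_wpow]

theorem wpow_wrep {v : List A} (hv : v ≠ []) {i : ℕ} (hi : 0 < i) :
    wpow (wrep v i) = wpow v :=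
  eq_of_isFixedPt_wcat (wrep_ne_nil hv hi) (isFixedPt_wcat_wpow _) (isFixedPt_wcat_wrep_wpow v i)

theorem exists_rotate_of_upw_eq {u V x Y : List A} (hV : V ≠ [])
    (hlen : Y.length = V.length) (hle : u.length ≤ x.length) (h : upw u V = upw x Y) :
    ∃ q s t, s ++ t = V ∧ x = u ++ wrep V q ++ s ∧ Y = t ++ s := by
  set d := x.length - u.length
  set s := V.take (d % V.length)
  set t := V.drop (d % V.length)
  have hst : s ++ t = V := List.take_append_drop _ _
  have hshift : upw u V = upw (u ++ wrep V (d / V.length) ++ s) (t ++ s) := by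
    rw [upw, upw, wcat_append, wcat_append, wcat_wpow_rotate, hst, isFixedPt_wcat_wrep_wpow]
  have hVpos : 0 < V.length := List.length_pos_iff.mpr hV
  have hxlen : x.length = (u ++ wrep V (d / V.length) ++ s).length := by
    have := Nat.div_add_mod d V.length
    have := Nat.mod_lt d hVpos
    simp only [List.length_append, length_wrep, s, List.length_take]
    rw [Nat.min_eq_left this.le, Nat.mul_comm]
    omega
  obtain ⟨hx, hY⟩ := wcat_inj hxlen (h.symm.trans hshift)
  exact ⟨_, s, t, hst, hx, wpow_inj (by simp [hlen, s, t]; omega) hY⟩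

end Words

section Congruence

variable {A : Type} {L : Set (ℕ → A)}

theorem simL.refl (x : List A) : simL L x x := fun _ => Iff.rfl

theorem simL.symm {x y : List A} (h : simL L x y) : simL L y x := fun w => (h w).symm

theorem simL.trans {x y z : List A} (h : simL L x y) (h' : simL L y z) : simL L x z :=
  fun w => (h w).trans (h' w)

theorem simL.append_right {x y : List A} (h : simL L x y) (a : List A) :
    simL L (x ++ a) (y ++ a) := fun w => by
  rw [wcat_append, wcat_append]
  exact h (wcat a w)

theorem uInv_iff_of_simL {U U' : List A} (hs : simL L U U') (m : List A) :
    UInv L U m ↔ UInv L U' m :=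
  ⟨fun h => hs.symm.trans (h.trans (hs.append_right m)),
    fun h => hs.trans (h.trans (hs.append_right m).symm)⟩

theorem uInv_wrep {u v : List A} (h : UInv L u v) (k : ℕ) : UInv L u (wrep v k) := by
  induction k with
  | zero => simpa [UInv, wrep_zero] using simL.refl u
  | succ k ih =>
    have := h.trans ((uInv_iff_of_simL h _).mp ih)
    rwa [List.append_assoc, ← wrep_succ] at this

end Congruence

section Colors

variable {A : Type} [Inhabited A] {L : Set (ℕ → A)}

theorem ncol_of_uInv {u v : List A} (h : UInv L u v) :
    ncol L u v = sInf {c | ColorAtMost L u c v} := by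
  rw [ncol, if_pos ⟨[], by rwa [List.append_nil]⟩]

theorem ColorAtMost.append {u v : List A} {c : ℕ} (h : ColorAtMost L u c v) (z : List A) :
    ColorAtMost L u c (v ++ z) := by
  rw [ColorAtMost] at h ⊢
  intro z' hz'
  rw [List.append_assoc] at hz' ⊢
  exact h (z ++ z') hz'

theorem ColorAtMost.of_simL {U U' : List A} (hs : simL L U U') {c : ℕ} {v : List A}
    (h : ColorAtMost L U c v) : ColorAtMost L U' c v := by
  induction c using Nat.strong_induction_on generalizing v with
  | _ c ih =>
    rw [ColorAtMost] at h ⊢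
    intro z hz
    rcases h z ((uInv_iff_of_simL hs _).mpr hz) with hmem | ⟨i, hi, c', hc'⟩
    · exact .inl ((hs _).symm.trans hmem)
    · exact .inr ⟨i, hi, c', ih c' c'.isLt hc'⟩

theorem ColorAtMost.rotate {c : ℕ} {U a b : List A} {j : ℕ}
    (h : ColorAtMost L (U ++ a) c (wrep (b ++ a) j)) :
    ColorAtMost L U c (wrep (a ++ b) (j + 1)) := by
  induction c using Nat.strong_induction_on generalizing U a b j with
  | _ c ih =>
    rw [ColorAtMost] at h ⊢
    intro z hz
    set r := wrep (b ++ a) j ++ b ++ z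
    have hr : wrep (a ++ b) (j + 1) ++ z = a ++ r := by simp [r, wrep_append_succ]
    have hra : wrep (b ++ a) j ++ (b ++ z ++ a) = r ++ a := by simp [r]
    rw [hr] at hz ⊢
    have hza : UInv L (U ++ a) (r ++ a) := by
      have := hz.append_right a
      rwa [show U ++ (a ++ r) ++ a = U ++ a ++ (r ++ a) by simp] at this
    rcases h (b ++ z ++ a) (hra ▸ hza) with hmem | ⟨i, -, c', hc'⟩
    · rw [hra, upw, wcat_append, wcat_wpow_rotate] at hmem
      exact .inl hmem
    · rw [hra] at hc'
      exact .inr ⟨i + 1, i.succ_pos, c', ih c' c'.isLt hc'⟩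

def PowColorAtMost (L : Set (ℕ → A)) (u : List A) (c : ℕ) (v : List A) : Prop :=
  ∃ i, ColorAtMost L u c (wrep v (i + 1))

theorem powColorAtMost_wrep_iff {u v : List A} {c j : ℕ} (hj : 0 < j) :
    PowColorAtMost L u c (wrep v j) ↔ PowColorAtMost L u c v := by
  obtain ⟨j, rfl⟩ : ∃ k, j = k + 1 := ⟨j - 1, by omega⟩
  simp only [PowColorAtMost, wrep_mul]
  constructor
  · rintro ⟨i, hi⟩
    exact ⟨i * (j + 1) + j, by rwa [show (i + 1) * (j + 1) = i * (j + 1) + j + 1 by ring] at hi⟩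
  · rintro ⟨i, hi⟩
    refine ⟨i, ?_⟩
    rw [show (i + 1) * (j + 1) = (i + 1) + (i + 1) * j by ring, wrep_add]
    exact hi.append _

theorem powColorAtMost_iff_of_simL {U U' : List A} (hs : simL L U U') {c : ℕ} {v : List A} :
    PowColorAtMost L U c v ↔ PowColorAtMost L U' c v :=
  ⟨fun ⟨i, hi⟩ => ⟨i, hi.of_simL hs⟩, fun ⟨i, hi⟩ => ⟨i, hi.of_simL hs.symm⟩⟩

theorem PowColorAtMost.of_append_rotate {U a b : List A} {c : ℕ}
    (h : PowColorAtMost L (U ++ a) c (b ++ a)) : PowColorAtMost L U c (a ++ b) :=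
  let ⟨i, hi⟩ := h
  ⟨i + 1, hi.rotate⟩

theorem powColorAtMost_append_rotate_iff {U a b : List A} (h : UInv L U (a ++ b)) {c : ℕ} :
    PowColorAtMost L (U ++ a) c (b ++ a) ↔ PowColorAtMost L U c (a ++ b) := by
  refine ⟨PowColorAtMost.of_append_rotate, fun hab => ?_⟩
  refine PowColorAtMost.of_append_rotate (U := U ++ a) ?_
  rw [List.append_assoc]
  exact (powColorAtMost_iff_of_simL h).mp hab

theorem ncol_eq_sInf_powColorAtMost {u v : List A} (h : UReliable L u v) :
    ncol L u v = sInf {c | PowColorAtMost L u c v} := by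
  rw [ncol_of_uInv h.1]
  unfold PowColorAtMost
  rw [Nat.sInf_setOf_exists_eq fun i => ?_]
  have hi := h.2 (i + 1) i.succ_pos
  rw [ncol_of_uInv h.1, ncol_of_uInv (uInv_wrep h.1 _)] at hi
  exact_mod_cast hi.symm

theorem powColorAtMost_iff_of_upw_eq_of_length_le {u v x y : List A} (hu : UInv L u v)
    (hv : v ≠ []) (hy : y ≠ []) (hle : u.length ≤ x.length) (heq : upw u v = upw x y)
    {c : ℕ} : PowColorAtMost L u c v ↔ PowColorAtMost L x c y := by
  have hvpos : 0 < v.length := List.length_pos_iff.mpr hv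
  have hypos : 0 < y.length := List.length_pos_iff.mpr hy
  set V := wrep v y.length
  have hVY : upw u V = upw x (wrep y v.length) := by
    rwa [upw, upw, wpow_wrep hv hypos, wpow_wrep hy hvpos]
  obtain ⟨q, s, t, hst, hx, hY⟩ := exists_rotate_of_upw_eq (wrep_ne_nil hv hypos)
    (by simp only [length_wrep, Nat.mul_comm]) hle hVY
  have hV : UInv L u V := uInv_wrep hu _
  have hq : simL L u (u ++ wrep V q) := uInv_wrep hV q
  have hqV : UInv L (u ++ wrep V q) (s ++ t) := hst ▸ (uInv_iff_of_simL hq V).mp hV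
  calc PowColorAtMost L u c v
      ↔ PowColorAtMost L u c V := (powColorAtMost_wrep_iff hypos).symm
    _ ↔ PowColorAtMost L (u ++ wrep V q) c (s ++ t) := hst ▸ powColorAtMost_iff_of_simL hq
    _ ↔ PowColorAtMost L (u ++ wrep V q ++ s) c (t ++ s) :=
      (powColorAtMost_append_rotate_iff hqV).symm
    _ ↔ PowColorAtMost L x c (wrep y v.length) := by rw [hx, hY]
    _ ↔ PowColorAtMost L x c y := powColorAtMost_wrep_iff hvpos

theorem powColorAtMost_iff_of_upw_eq {u v x y : List A} (hu : UInv L u v) (hx : UInv L x y)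
    (hv : v ≠ []) (hy : y ≠ []) (heq : upw u v = upw x y) {c : ℕ} :
    PowColorAtMost L u c v ↔ PowColorAtMost L x c y := by
  rcases le_total u.length x.length with hle | hle
  · exact powColorAtMost_iff_of_upw_eq_of_length_le hu hv hy hle heq
  · exact (powColorAtMost_iff_of_upw_eq_of_length_le hx hy hv hle heq.symm).symm

end Colors

theorem reliable_normalizations_agree_general {A : Type} [Inhabited A] (L : Set (ℕ → A))
    (u v x y : List A) (hv : v ≠ []) (hy : y ≠ [])
    (h1 : UReliable L u v) (h2 : UReliable L x y) (heq : upw u v = upw x y) :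
    ncol L u v = ncol L x y := by
  rw [ncol_eq_sInf_powColorAtMost h1, ncol_eq_sInf_powColorAtMost h2]
  simp_rw [powColorAtMost_iff_of_upw_eq h1.1 h2.1 hv hy heq]

/-- reliable normalizations of the same ultimately periodic word agree
on colors. -/
theorem reliable_normalizations_agree {A : Type} [Inhabited A] (L : Set (ℕ → A))
    (hreg : OmegaRegular L) (u v x y : List A) (hv : v ≠ []) (hy : y ≠ [])
    (h1 : UReliable L u v) (h2 : UReliable L x y) (heq : upw u v = upw x y) :
    ncol L u v = ncol L x y :=
  reliable_normalizations_agree_general L u v x y hv hy h1 h2 heq
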